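/- arXiv:1710.09526 — 2 statements merged into one kernel-verified Lean document; each statement's English description precedes it below -/
import Mathlib

section
/- Let Π = {C_1,…,C_t} be a partition of [n]. Then Π is equitable for G if and only if for any two vertices x and y belonging to the same cell of Π, every eigenvalue λ of A(G) and every j ∈ {1,…,t}, one has ⟨e_x, proj_{V_λ}(R_j)⟩ = ⟨e_y, proj_{V_λ}(R_j)⟩. -/
/-- The characteristic vector of a set of vertices, as a vector of Euclidean space `ℝⁿ`. -/
noncomputable def charVec {n : ℕ} (C : Finset (Fin n)) : EuclideanSpace ℝ (Fin n) :=
  WithLp.toLp 2 (fun v => if v ∈ C then (1 : ℝ) else 0)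

/-- The adjacency matrix of `G`, as a linear endomorphism of Euclidean space `ℝⁿ`. -/
noncomputable def adjEnd {n : ℕ} (G : SimpleGraph (Fin n)) [DecidableRel G.Adj] :
    Module.End ℝ (EuclideanSpace ℝ (Fin n)) :=
  Matrix.toEuclideanLin (G.adjMatrix ℝ)

/-! Let `W` be the space of vectors constant on the cells of `Π`. It is spanned by the `R_j`, and
`(A R_j)_x` is the number of neighbours of `x` in `C_j`, so `Π` is equitable iff `A W ⊆ W`.
Since `A` is symmetric, an `A`-invariant subspace is the sum of its intersections with the
eigenspaces, hence is mapped into itself by every `proj_{V_λ}`. Conversely, `A = ∑ λ proj_{V_λ}`,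
so `A R_j ∈ W` as soon as every `proj_{V_λ} R_j` lies in `W`. -/

open Module.End Finset

namespace LinearMap.IsSymmetric

variable {𝕜 E : Type*} [RCLike 𝕜] [NormedAddCommGroup E] [InnerProductSpace 𝕜 E]
  [FiniteDimensional 𝕜 E] {T : E →ₗ[𝕜] E}

theorem iSup_eigenspace_eq_top (hT : T.IsSymmetric) : ⨆ μ, eigenspace T μ = ⊤ :=
  Submodule.orthogonal_eq_bot_iff.mp hT.orthogonalComplement_iSup_eigenspaces_eq_bot

theorem sum_starProjection_eigenspace (hT : T.IsSymmetric) (v : E) :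
    ∑ μ : Eigenvalues T, (eigenspace T μ).starProjection v = v := by
  refine hT.orthogonalFamily_eigenspaces'.sum_projection_of_mem_iSup v ?_
  rw [Submodule.orthogonal_eq_bot_iff.mp hT.orthogonalComplement_iSup_eigenspaces_eq_bot']
  exact Submodule.mem_top

theorem apply_mem_of_forall_starProjection_eigenspace_mem (hT : T.IsSymmetric)
    {U : Submodule 𝕜 E} {v : E} (h : ∀ μ : Eigenvalues T, (eigenspace T μ).starProjection v ∈ U) :
    T v ∈ U := by
  rw [← hT.sum_starProjection_eigenspace v, map_sum]
  refine Submodule.sum_mem U fun μ _ => ?_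
  rw [mem_eigenspace_iff.mp (Submodule.starProjection_apply_mem _ v)]
  exact U.smul_mem _ (h μ)

theorem starProjection_eigenspace_mem (hT : T.IsSymmetric) {U : Submodule 𝕜 E}
    (hU : ∀ x ∈ U, T x ∈ U) (μ : 𝕜) {u : E} (hu : u ∈ U) :
    (eigenspace T μ).starProjection u ∈ U := by
  have hsplit : U = ⨆ ν, U ⊓ eigenspace T ν :=
    Submodule.eq_iSup_inf_genEigenspace 1 hU hT.iSup_eigenspace_eq_top
  rw [hsplit] at hu
  induction hu using Submodule.iSup_induction' with
  | mem ν w hw =>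
    obtain ⟨hwU, hwν⟩ := Submodule.mem_inf.mp hw
    by_cases hνμ : ν = μ
    · subst hνμ
      rwa [Submodule.starProjection_eq_self_iff.mpr hwν]
    · rw [(Submodule.starProjection_apply_eq_zero_iff _).mpr
        (hT.orthogonalFamily_eigenspaces.isOrtho hνμ hwν)]
      exact U.zero_mem
  | zero => simp
  | add w w' _ _ hw hw' => simpa using U.add_mem hw hw'

end LinearMap.IsSymmetric

section EquitablePartition

variable {n t : ℕ}

def IsEquitable (G : SimpleGraph (Fin n)) [DecidableRel G.Adj] (C : Fin t → Finset (Fin n)) :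
    Prop :=
  ∀ i j, ∀ x ∈ C i, ∀ y ∈ C i, #{d ∈ C j | G.Adj x d} = #{d ∈ C j | G.Adj y d}

def cellConst (C : Fin t → Finset (Fin n)) : Submodule ℝ (EuclideanSpace ℝ (Fin n)) where
  carrier := {v | ∀ i, ∀ x ∈ C i, ∀ y ∈ C i, v x = v y}
  add_mem' ha hb i x hx y hy := by simp [ha i x hx y hy, hb i x hx y hy]
  zero_mem' _ _ _ _ _ := rfl
  smul_mem' c _ ha i x hx y hy := by simp [ha i x hx y hy]

theorem mem_cellConst {C : Fin t → Finset (Fin n)} {v : EuclideanSpace ℝ (Fin n)} :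
    v ∈ cellConst C ↔ ∀ i, ∀ x ∈ C i, ∀ y ∈ C i, v x = v y :=
  Iff.rfl

theorem charVec_apply (s : Finset (Fin n)) (v : Fin n) : charVec s v = if v ∈ s then 1 else 0 :=
  rfl

theorem charVec_mem_cellConst {C : Fin t → Finset (Fin n)}
    (hdisj : ∀ i j, i ≠ j → Disjoint (C i) (C j)) (j : Fin t) : charVec (C j) ∈ cellConst C := by
  intro i x hx y hy
  by_cases hij : i = j
  · subst hij
    simp [charVec_apply, hx, hy]
  · simp [charVec_apply, disjoint_left.mp (hdisj i j hij) hx,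
      disjoint_left.mp (hdisj i j hij) hy]

theorem exists_eq_sum_smul_charVec {C : Fin t → Finset (Fin n)}
    (hdisj : ∀ i j, i ≠ j → Disjoint (C i) (C j)) (hcover : ∀ v, ∃ i, v ∈ C i)
    {v : EuclideanSpace ℝ (Fin n)} (hv : v ∈ cellConst C) :
    ∃ c : Fin t → ℝ, v = ∑ j, c j • charVec (C j) := by
  choose c hc using fun j => show ∃ a, ∀ x ∈ C j, v x = a from
    (C j).eq_empty_or_nonempty.elim (fun h => ⟨0, by simp [h]⟩)
      fun ⟨x₀, hx₀⟩ => ⟨v x₀, fun x hx => hv j x hx x₀ hx₀⟩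
  refine ⟨c, ?_⟩
  ext z
  obtain ⟨i, hz⟩ := hcover z
  have hcell : ∀ j, j ≠ i → z ∉ C j := fun j hji hzj =>
    disjoint_left.mp (hdisj j i hji) hzj hz
  rw [WithLp.ofLp_sum, Finset.sum_apply, Finset.sum_eq_single i]
  · simp [charVec_apply, hz, hc i z hz]
  · intro j _ hji
    simp [charVec_apply, hcell j hji]
  · simp

theorem adjEnd_apply (G : SimpleGraph (Fin n)) [DecidableRel G.Adj]
    (v : EuclideanSpace ℝ (Fin n)) (x : Fin n) :
    adjEnd G v x = ∑ d with G.Adj x d, v d := by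
  simp [adjEnd, Matrix.toLpLin_apply, Matrix.mulVec, dotProduct, ite_mul, sum_ite]

theorem adjEnd_charVec_apply (G : SimpleGraph (Fin n)) [DecidableRel G.Adj]
    (s : Finset (Fin n)) (x : Fin n) : adjEnd G (charVec s) x = #{d ∈ s | G.Adj x d} := by
  simp [adjEnd_apply, charVec_apply, inter_comm, inter_filter]

theorem adjEnd_isSymmetric (G : SimpleGraph (Fin n)) [DecidableRel G.Adj] :
    (adjEnd G).IsSymmetric := by
  rw [adjEnd, Matrix.isSymmetric_toEuclideanLin_iff]
  exact G.isSymm_adjMatrix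

theorem isEquitable_iff_adjEnd_charVec_mem (G : SimpleGraph (Fin n)) [DecidableRel G.Adj]
    (C : Fin t → Finset (Fin n)) :
    IsEquitable G C ↔ ∀ j, adjEnd G (charVec (C j)) ∈ cellConst C := by
  simp only [IsEquitable, mem_cellConst, adjEnd_charVec_apply, Nat.cast_inj]
  exact forall_comm

theorem adjEnd_mem_cellConst {G : SimpleGraph (Fin n)} [DecidableRel G.Adj]
    {C : Fin t → Finset (Fin n)} (hdisj : ∀ i j, i ≠ j → Disjoint (C i) (C j))
    (hcover : ∀ v, ∃ i, v ∈ C i) (hG : IsEquitable G C) {v : EuclideanSpace ℝ (Fin n)}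
    (hv : v ∈ cellConst C) : adjEnd G v ∈ cellConst C := by
  obtain ⟨c, rfl⟩ := exists_eq_sum_smul_charVec hdisj hcover hv
  rw [map_sum]
  refine Submodule.sum_mem _ fun j _ => ?_
  rw [map_smul]
  exact Submodule.smul_mem _ _ ((isEquitable_iff_adjEnd_charVec_mem G C).mp hG j)

end EquitablePartition

theorem equitable_iff_eigenspace_projections_general
    {n t : ℕ} (G : SimpleGraph (Fin n)) [DecidableRel G.Adj]
    (C : Fin t → Finset (Fin n))
    (hdisj : ∀ i j : Fin t, i ≠ j → Disjoint (C i) (C j))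
    (hcover : ∀ v : Fin n, ∃ i : Fin t, v ∈ C i) :
    (∀ i j : Fin t, ∀ x ∈ C i, ∀ y ∈ C i,
        ((C j).filter (fun d => G.Adj x d)).card =
        ((C j).filter (fun d => G.Adj y d)).card) ↔
    (∀ i : Fin t, ∀ x ∈ C i, ∀ y ∈ C i, ∀ lam : ℝ,
        Module.End.HasEigenvalue (adjEnd G) lam →
        ∀ j : Fin t,
          (inner ℝ (EuclideanSpace.single x (1 : ℝ))
            ((Submodule.orthogonalProjectionOnto (Module.End.eigenspace (adjEnd G) lam) (charVec (C j)) :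
                Module.End.eigenspace (adjEnd G) lam) :
              EuclideanSpace ℝ (Fin n)) : ℝ) =
          (inner ℝ (EuclideanSpace.single y (1 : ℝ))
            ((Submodule.orthogonalProjectionOnto (Module.End.eigenspace (adjEnd G) lam) (charVec (C j)) :
                Module.End.eigenspace (adjEnd G) lam) :
              EuclideanSpace ℝ (Fin n)) : ℝ)) := by
  simp only [← Submodule.starProjection_apply, EuclideanSpace.inner_single_left, map_one, one_mul]
  change IsEquitable G C ↔ _
  have hA := adjEnd_isSymmetric G
  constructor
  · intro hG i x hx y hy lam _ j
    exact hA.starProjection_eigenspace_mem (fun _ => adjEnd_mem_cellConst hdisj hcover hG) lam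
      (charVec_mem_cellConst hdisj j) i x hx y hy
  · intro hproj
    refine (isEquitable_iff_adjEnd_charVec_mem G C).mpr fun j => ?_
    exact hA.apply_mem_of_forall_starProjection_eigenspace_mem
      fun μ i x hx y hy => hproj i x hx y hy μ μ.2 j

/-- Lemma 1: a partition `Π = {C_1, …, C_t}` of `[n]` is equitable for `G` if and only if
for any two vertices `x, y` in the same cell, every eigenvalue `λ` of `A(G)` and every
cell index `j`, one has `⟨e_x, proj_{V_λ}(R_j)⟩ = ⟨e_y, proj_{V_λ}(R_j)⟩`. -/
theorem equitable_iff_eigenspace_projections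
    {n t : ℕ} (G : SimpleGraph (Fin n)) [DecidableRel G.Adj]
    (C : Fin t → Finset (Fin n))
    (hdisj : ∀ i j : Fin t, i ≠ j → Disjoint (C i) (C j))
    (hcover : ∀ v : Fin n, ∃ i : Fin t, v ∈ C i)
    (hne : ∀ i : Fin t, (C i).Nonempty) :
    (∀ i j : Fin t, ∀ x ∈ C i, ∀ y ∈ C i,
        ((C j).filter (fun d => G.Adj x d)).card =
        ((C j).filter (fun d => G.Adj y d)).card) ↔
    (∀ i : Fin t, ∀ x ∈ C i, ∀ y ∈ C i, ∀ lam : ℝ,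
        Module.End.HasEigenvalue (adjEnd G) lam →
        ∀ j : Fin t,
          (inner ℝ (EuclideanSpace.single x (1 : ℝ))
            ((Submodule.orthogonalProjectionOnto (Module.End.eigenspace (adjEnd G) lam) (charVec (C j)) :
                Module.End.eigenspace (adjEnd G) lam) :
              EuclideanSpace ℝ (Fin n)) : ℝ) =
          (inner ℝ (EuclideanSpace.single y (1 : ℝ))
            ((Submodule.orthogonalProjectionOnto (Module.End.eigenspace (adjEnd G) lam) (charVec (C j)) :
                Module.End.eigenspace (adjEnd G) lam) :
              EuclideanSpace ℝ (Fin n)) : ℝ)) :=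
  equitable_iff_eigenspace_projections_general G C hdisj hcover
end

section
/- Let T = {t_1,…,t_s} be an orbit of a permutation group 𝔊 on the finite set [n], let H = ⟨𝔊_{t_1},…,𝔊_{t_s}⟩, and let t ∈ T. Then H·t ≠ T (equivalently, the multipartite graph [Π*_{t_1},…,Π*_{t_s}] restricted to T is disconnected) if and only if there exists a block B for 𝔊 with t ∈ B ⊊ T such that the action of 𝔊 on the block system {γB : γ ∈ 𝔊} is regular, i.e., for all γ ∈ 𝔊 and all δ ∈ 𝔊 with δB = B one has δ(γB) = γB. -/
open Pointwise

def stabSup {n : ℕ} (𝔊 : Subgroup (Equiv.Perm (Fin n))) (t₀ : Fin n) : Subgroup 𝔊 :=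
  ⨆ t ∈ MulAction.orbit 𝔊 t₀, MulAction.stabilizer 𝔊 t

section Aux

variable {n : ℕ} {𝔊 : Subgroup (Equiv.Perm (Fin n))} {t₀ : Fin n}

lemma stab_le_stabSup {u : Fin n} (hu : u ∈ MulAction.orbit 𝔊 t₀) :
    MulAction.stabilizer 𝔊 u ≤ stabSup 𝔊 t₀ :=
  le_iSup₂_of_le u hu le_rfl

lemma map_conj_stabSup_le (γ : 𝔊) :
    (stabSup 𝔊 t₀).map (MulAut.conj γ).toMonoidHom ≤ stabSup 𝔊 t₀ := by
  rw [stabSup]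
  simp only [Subgroup.map_iSup]
  refine iSup₂_le fun u hu => ?_
  rw [← MulAction.stabilizer_smul_eq_stabilizer_map_conj]
  exact stab_le_stabSup (MulAction.smul_orbit γ t₀ ▸ Set.smul_mem_smul_set hu)

lemma conj_mem_stabSup (γ : 𝔊) {h : 𝔊} (hh : h ∈ stabSup 𝔊 t₀) :
    γ * h * γ⁻¹ ∈ stabSup 𝔊 t₀ :=
  map_conj_stabSup_le γ ⟨h, hh, rfl⟩

lemma smul_orbit_stabSup (γ : 𝔊) (t : Fin n) :
    γ • (MulAction.orbit (stabSup 𝔊 t₀) t : Set (Fin n)) =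
      MulAction.orbit (stabSup 𝔊 t₀) (γ • t) := by
  ext x
  constructor
  · rintro ⟨y, ⟨⟨h, hh⟩, rfl⟩, rfl⟩
    refine ⟨⟨γ * h * γ⁻¹, conj_mem_stabSup γ hh⟩, ?_⟩
    show (γ * h * γ⁻¹) • γ • t = γ • h • t
    rw [mul_smul, mul_smul, inv_smul_smul]
  · rintro ⟨⟨h, hh⟩, rfl⟩
    refine ⟨(γ⁻¹ * h * γ) • t, ⟨⟨γ⁻¹ * h * γ, ?_⟩, rfl⟩, ?_⟩
    · simpa using conj_mem_stabSup γ⁻¹ hh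
    · show γ • (γ⁻¹ * h * γ) • t = (h : 𝔊) • γ • t
      rw [mul_smul, mul_smul, smul_inv_smul]

end Aux

/-- Theorem 8: for `H = ⟨𝔊_{t_1},…,𝔊_{t_s}⟩` generated by all point stabilizers of the
elements of an orbit `T` and `t ∈ T`, one has `H·t ≠ T` if and only if there is a block
`B` for `𝔊` with `t ∈ B ⊊ T` on whose block system `𝔊` acts regularly. -/
theorem orbit_proper_iff_regular_block_system
    {n : ℕ} (𝔊 : Subgroup (Equiv.Perm (Fin n))) (t₀ : Fin n) :
    ∀ t ∈ MulAction.orbit 𝔊 t₀,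
      (MulAction.orbit (stabSup 𝔊 t₀) t ≠ MulAction.orbit 𝔊 t₀) ↔
      (∃ B : Set (Fin n), t ∈ B ∧ B ⊂ MulAction.orbit 𝔊 t₀ ∧
        (∀ σ : 𝔊, σ • B = B ∨ (σ • B) ∩ B = ∅) ∧
        (∀ γ δ : 𝔊, δ • B = B → δ • (γ • B) = γ • B)) := by
  intro t ht
  have horb : MulAction.orbit 𝔊 t = MulAction.orbit 𝔊 t₀ := MulAction.orbit_eq_iff.mpr ht
  constructor
  · -- forward: take B = (stabSup 𝔊 t₀) • t
    intro hne
    have hsub : MulAction.orbit (stabSup 𝔊 t₀) t ⊆ MulAction.orbit 𝔊 t₀ := by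
      rintro x ⟨⟨h, hh⟩, rfl⟩
      exact horb ▸ ⟨h, rfl⟩
    refine ⟨MulAction.orbit (stabSup 𝔊 t₀) t, MulAction.mem_orbit_self t,
      hsub.ssubset_of_ne hne, ?_, ?_⟩
    · intro σ
      rw [smul_orbit_stabSup]
      by_cases hmem : σ • t ∈ MulAction.orbit (stabSup 𝔊 t₀) t
      · exact Or.inl (MulAction.orbit_eq_iff.mpr hmem)
      · refine Or.inr (Set.eq_empty_iff_forall_notMem.mpr fun x ⟨hx1, hx2⟩ => hmem ?_)
        have e1 : MulAction.orbit (stabSup 𝔊 t₀) (σ • t) = MulAction.orbit (stabSup 𝔊 t₀) x :=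
          MulAction.orbit_eq_iff.mpr (MulAction.mem_orbit_symm.mp hx1)
        have e2 : MulAction.orbit (stabSup 𝔊 t₀) x = MulAction.orbit (stabSup 𝔊 t₀) t :=
          MulAction.orbit_eq_iff.mpr hx2
        exact MulAction.orbit_eq_iff.mp (e1.trans e2)
    · intro γ δ hδ
      -- δ ∈ stabSup
      have hδt : δ • t ∈ MulAction.orbit (stabSup 𝔊 t₀) t := by
        rw [← hδ]
        exact Set.smul_mem_smul_set (MulAction.mem_orbit_self t)
      obtain ⟨⟨h, hh⟩, hht⟩ := hδt
      have hginv : (h : 𝔊)⁻¹ * δ ∈ MulAction.stabilizer 𝔊 t := by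
        rw [MulAction.mem_stabilizer_iff, mul_smul, ← hht]
        exact inv_smul_smul _ _
      have hδH : δ ∈ stabSup 𝔊 t₀ := by
        have := (stab_le_stabSup (horb ▸ MulAction.mem_orbit_self t)) hginv
        have h2 := (stabSup 𝔊 t₀).mul_mem hh this
        simpa using h2
      rw [smul_orbit_stabSup, smul_orbit_stabSup]
      exact MulAction.orbit_eq_iff.mpr ⟨⟨δ, hδH⟩, rfl⟩
  · rintro ⟨B, htB, hBT, hblock, hreg⟩
    have key : stabSup 𝔊 t₀ ≤ MulAction.stabilizer 𝔊 B := by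
      rw [stabSup]
      refine iSup₂_le fun u hu σ hσ => ?_
      rw [MulAction.mem_stabilizer_iff] at hσ ⊢
      obtain ⟨γ, rfl⟩ : ∃ γ : 𝔊, γ • t = u := by
        rw [← horb] at hu; obtain ⟨γ, hγ⟩ := hu; exact ⟨γ, hγ⟩
      have h1 : (γ⁻¹ * σ * γ) • B = B := by
        rcases hblock (γ⁻¹ * σ * γ) with h | h
        · exact h
        · exfalso
          have hmem : t ∈ (γ⁻¹ * σ * γ) • B ∩ B := by
            refine ⟨⟨t, htB, ?_⟩, htB⟩
            show (γ⁻¹ * σ * γ) • t = t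
            rw [mul_smul, mul_smul, hσ, inv_smul_smul]
          rw [h] at hmem
          exact hmem
      have h2 := hreg γ⁻¹ (γ⁻¹ * σ * γ) h1
      calc σ • B = γ • ((γ⁻¹ * σ * γ) • (γ⁻¹ • B)) := by
            rw [smul_smul, smul_smul]; congr 1; group
        _ = γ • γ⁻¹ • B := by rw [h2]
        _ = B := smul_inv_smul _ _
    have hsub : MulAction.orbit (stabSup 𝔊 t₀) t ⊆ B := by
      rintro x ⟨⟨h, hh⟩, rfl⟩
      have hB : (h : 𝔊) • B = B := key hh
      rw [← hB]
      exact Set.smul_mem_smul_set htB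
    obtain ⟨x, hxT, hxB⟩ := Set.exists_of_ssubset hBT
    intro heq
    exact hxB (hsub (heq ▸ hxT))
end
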